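/- Let f : [0,T] → [0,∞) be differentiable with f(0) = f₀ > 0, let φ : [0,T] → [0,∞) be integrable, and let M > 0. Suppose there is δ > 0 such that for every σ ∈ (0,δ], f'(t) ≤ (M/σ) f(t)^{1+σ} φ(t) for all t ∈ [0,T]. Then f(t) ≤ f₀ · (2^{1/δ} + f₀)^{2^{2 + 16 M ∫₀ᵗ φ(s) ds}} for all t ∈ [0,T]. -/
import Mathlib


open MeasureTheory Set

set_option maxHeartbeats 1000000 in
theorem stmt_1 (T M δ f₀ : ℝ) (f f' φ : ℝ → ℝ)
    (hT : 0 < T) (hM : 0 < M) (hδ : 0 < δ) (hf₀ : 0 < f₀)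
    (hf0 : f 0 = f₀)
    (hfnn : ∀ t ∈ Set.Icc (0:ℝ) T, 0 ≤ f t)
    (hφnn : ∀ t ∈ Set.Icc (0:ℝ) T, 0 ≤ φ t)
    (hφint : IntegrableOn φ (Set.Icc (0:ℝ) T))
    (hderiv : ∀ t ∈ Set.Icc (0:ℝ) T, HasDerivAt f (f' t) t)
    (hineq : ∀ σ ∈ Set.Ioc (0:ℝ) δ, ∀ t ∈ Set.Icc (0:ℝ) T,
      f' t ≤ (M / σ) * (f t) ^ (1 + σ) * φ t) :
    ∀ t ∈ Set.Icc (0:ℝ) T,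
      f t ≤ f₀ * ((2:ℝ) ^ (1 / δ) + f₀) ^
        ((2:ℝ) ^ (2 + 16 * M * ∫ s in (0:ℝ)..t, φ s)) := by
  intro t ht
  obtain ⟨ht0, htT⟩ := ht
  have h2pos : (0:ℝ) < 2 := two_pos
  have hlog2 : 0 < Real.log 2 := Real.log_pos one_lt_two
  set C : ℝ := (2:ℝ) ^ (1/δ) with hCdef
  have hCpos : 0 < C := Real.rpow_pos_of_pos h2pos _
  have hC1 : 1 < C := by
    rw [hCdef, Real.one_lt_rpow_iff_of_pos h2pos]
    exact Or.inl ⟨one_lt_two, by positivity⟩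
  have hlogC : Real.log C = Real.log 2 / δ := by
    rw [hCdef, Real.log_rpow h2pos]; ring
  have ha : 0 < Real.log 2 / δ := by positivity
  set K : ℝ := 2 * M / Real.log 2 with hKdef
  have hKpos : 0 < K := by positivity
  -- pointwise key inequality
  have key : ∀ u ∈ Set.Icc (0:ℝ) T, f' u ≤ K * φ u * (Real.log (C + f u) * f u) := by
    intro u hu
    have hfu := hfnn u hu
    have hφu := hφnn u hu
    have hCf1 : 1 < C + f u := by linarith
    have hCfpos : 0 < C + f u := by linarith
    have hlogCf : Real.log 2 / δ ≤ Real.log (C + f u) := by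
      rw [← hlogC]; exact Real.log_le_log hCpos (by linarith)
    have hlogCfpos : 0 < Real.log (C + f u) := lt_of_lt_of_le ha hlogCf
    rcases eq_or_lt_of_le hfu with h0 | hfpos
    · have hz : f u = 0 := h0.symm
      have h1 := hineq δ ⟨hδ, le_rfl⟩ u hu
      rw [hz, Real.zero_rpow (by positivity : (1:ℝ) + δ ≠ 0)] at h1
      rw [hz]
      simpa using h1
    · rcases le_or_gt (f u) C with hle | hgt
      · -- use σ = δ
        have h1 := hineq δ ⟨hδ, le_rfl⟩ u hu
        have hfδ : f u ^ δ ≤ 2 := by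
          calc f u ^ δ ≤ C ^ δ := Real.rpow_le_rpow hfpos.le hle hδ.le
            _ = 2 := by
              rw [hCdef, ← Real.rpow_mul h2pos.le, one_div_mul_cancel hδ.ne', Real.rpow_one]
        have hrw : f u ^ (1 + δ) = f u * f u ^ δ := by
          rw [Real.rpow_add hfpos, Real.rpow_one]
        rw [hrw] at h1
        have h2 : f' u ≤ M / δ * (f u * 2) * φ u := by
          refine h1.trans ?_
          have h3 : f u * f u ^ δ ≤ f u * 2 := mul_le_mul_of_nonneg_left hfδ hfpos.le
          exact mul_le_mul_of_nonneg_right (mul_le_mul_of_nonneg_left h3 (by positivity)) hφu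
        refine h2.trans ?_
        have hKl : 2 * M / δ ≤ K * Real.log (C + f u) := by
          have he : K * (Real.log 2 / δ) = 2 * M / δ := by
            rw [hKdef]; field_simp
          calc 2*M/δ = K * (Real.log 2/δ) := he.symm
            _ ≤ K * Real.log (C + f u) := mul_le_mul_of_nonneg_left hlogCf hKpos.le
        calc M/δ*(f u*2)*φ u = (2*M/δ) * (φ u * f u) := by ring
          _ ≤ (K * Real.log (C+f u)) * (φ u * f u) :=
              mul_le_mul_of_nonneg_right hKl (mul_nonneg hφu hfpos.le)
          _ = K * φ u * (Real.log (C+f u) * f u) := by ring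
      · -- use σ = log 2 / log (f u)
        have hlogfu : Real.log 2 / δ < Real.log (f u) := by
          rw [← hlogC]; exact Real.log_lt_log hCpos hgt
        have hlogfupos : 0 < Real.log (f u) := ha.trans hlogfu
        have hσpos : 0 < Real.log 2 / Real.log (f u) := div_pos hlog2 hlogfupos
        have hσle : Real.log 2 / Real.log (f u) ≤ δ := by
          rw [div_le_iff₀ hlogfupos]
          rw [div_lt_iff₀ hδ] at hlogfu
          nlinarith
        have h1 := hineq _ ⟨hσpos, hσle⟩ u hu
        have hrw : f u ^ (1 + Real.log 2 / Real.log (f u)) = f u * 2 := by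
          rw [Real.rpow_add hfpos, Real.rpow_one, Real.rpow_def_of_pos hfpos,
            mul_div_cancel₀ _ hlogfupos.ne', Real.exp_log h2pos]
        rw [hrw] at h1
        refine h1.trans ?_
        have hMs : M / (Real.log 2 / Real.log (f u)) = M * Real.log (f u) / Real.log 2 := by
          field_simp
        rw [hMs]
        have expand : M * Real.log (f u) / Real.log 2 * (f u * 2) * φ u
            = K * φ u * (Real.log (f u) * f u) := by
          rw [hKdef]; field_simp
        rw [expand]
        have hlogle : Real.log (f u) ≤ Real.log (C + f u) :=
          Real.log_le_log hfpos (by linarith)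
        exact mul_le_mul_of_nonneg_left
          (mul_le_mul_of_nonneg_right hlogle hfpos.le)
          (mul_nonneg hKpos.le hφu)
  -- integrability setup
  have hsubT : Icc (0:ℝ) t ⊆ Icc 0 T := Icc_subset_Icc le_rfl htT
  have hφt : IntegrableOn φ (Icc (0:ℝ) t) := hφint.mono_set hsubT
  have hφit : IntervalIntegrable φ volume 0 t := by
    apply IntegrableOn.intervalIntegrable
    rwa [uIcc_of_le ht0]
  set It : ℝ := ∫ s in (0:ℝ)..t, φ s with hItdef
  have hI0 : 0 ≤ It :=
    intervalIntegral.integral_nonneg ht0 (fun x hx => hφnn x ⟨hx.1, hx.2.trans htT⟩)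
  have hImono : ∀ u ∈ Icc (0:ℝ) t, (∫ s in (0:ℝ)..u, φ s) ≤ It := by
    intro u hu
    apply intervalIntegral.integral_mono_interval le_rfl hu.1 hu.2
    · filter_upwards [ae_restrict_mem measurableSet_Ioc] with x hx
      exact hφnn x ⟨hx.1.le, hx.2.trans htT⟩
    · exact hφit
  -- derivative of log log (C + f)
  have hg1deriv : ∀ u ∈ Icc (0:ℝ) T,
      HasDerivAt (fun v => Real.log (Real.log (C + f v)))
        (f' u / (C + f u) / Real.log (C + f u)) u := by
    intro u hu
    have hfu := hfnn u hu
    have hCfpos : (0:ℝ) < C + f u := by linarith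
    have hlogpos : 0 < Real.log (C + f u) := Real.log_pos (by linarith)
    have h1 : HasDerivAt (fun v => C + f v) (f' u) u := (hderiv u hu).const_add C
    exact (h1.log hCfpos.ne').log hlogpos.ne'
  -- Step 2 : doubly exponential bound on log (C + f u)
  have step2 : ∀ u ∈ Icc (0:ℝ) t,
      Real.log (C + f u) ≤ Real.log (C + f₀) * Real.exp (K * ∫ s in (0:ℝ)..u, φ s) := by
    intro u hu
    have huT : Icc (0:ℝ) u ⊆ Icc 0 T := Icc_subset_Icc le_rfl (hu.2.trans htT)
    have hcont : ContinuousOn (fun v => Real.log (Real.log (C + f v))) (Icc 0 u) :=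
      fun x hx => ((hg1deriv x (huT hx)).continuousAt).continuousWithinAt
    have hder : ∀ x ∈ Ioo (0:ℝ) u, HasDerivWithinAt (fun v => Real.log (Real.log (C + f v)))
        (f' x / (C + f x) / Real.log (C + f x)) (Ioi x) x :=
      fun x hx => (hg1deriv x (huT (Ioo_subset_Icc_self hx))).hasDerivWithinAt
    have hint : IntegrableOn (fun v => K * φ v) (Icc 0 u) volume :=
      ((hφt.mono_set (Icc_subset_Icc le_rfl hu.2)).const_mul K)
    have hbound : ∀ x ∈ Ioo (0:ℝ) u, f' x / (C + f x) / Real.log (C + f x) ≤ K * φ x := by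
      intro x hx
      have hxT : x ∈ Icc (0:ℝ) T := huT (Ioo_subset_Icc_self hx)
      have hfx := hfnn x hxT
      have hφx := hφnn x hxT
      have hCfpos : (0:ℝ) < C + f x := by linarith
      have hlogpos : 0 < Real.log (C + f x) := Real.log_pos (by linarith)
      rw [div_div, div_le_iff₀ (by positivity)]
      calc f' x ≤ K * φ x * (Real.log (C + f x) * f x) := key x hxT
        _ ≤ K * φ x * ((C + f x) * Real.log (C + f x)) := by
            refine mul_le_mul_of_nonneg_left ?_ (mul_nonneg hKpos.le hφx)
            rw [mul_comm (C + f x) _]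
            exact mul_le_mul_of_nonneg_left (by linarith) hlogpos.le
    have hFTC := intervalIntegral.sub_le_integral_of_hasDeriv_right_of_le hu.1 hcont hder hint hbound
    rw [intervalIntegral.integral_const_mul, hf0] at hFTC
    have hBpos : 0 < Real.log (C + f₀) := Real.log_pos (by linarith)
    have hlogposu : 0 < Real.log (C + f u) := by
      have := hfnn u (hsubT hu); exact Real.log_pos (by linarith)
    calc Real.log (C + f u) = Real.exp (Real.log (Real.log (C + f u))) :=
          (Real.exp_log hlogposu).symm
      _ ≤ Real.exp (Real.log (Real.log (C + f₀)) + K * ∫ s in (0:ℝ)..u, φ s) :=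
          Real.exp_le_exp.2 (by linarith)
      _ = Real.log (C + f₀) * Real.exp (K * ∫ s in (0:ℝ)..u, φ s) := by
          rw [Real.exp_add, Real.exp_log hBpos]
  set B : ℝ := Real.log (C + f₀) with hBdef
  have hBpos : 0 < B := Real.log_pos (by linarith)
  set Λ : ℝ := B * Real.exp (K * It) with hLdef
  have hΛpos : 0 < Λ := by positivity
  have step2' : ∀ u ∈ Icc (0:ℝ) t, Real.log (C + f u) ≤ Λ := by
    intro u hu
    refine (step2 u hu).trans ?_
    rw [hLdef]
    exact mul_le_mul_of_nonneg_left
      (Real.exp_le_exp.2 (mul_le_mul_of_nonneg_left (hImono u hu) hKpos.le)) hBpos.le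
  -- Step 3 : linear Gronwall with shift c
  have step3 : ∀ c : ℝ, 0 < c → f t ≤ (f₀ + c) * Real.exp (K * Λ * It) := by
    intro c hc
    have hg2deriv : ∀ u ∈ Icc (0:ℝ) T,
        HasDerivAt (fun v => Real.log (f v + c)) (f' u / (f u + c)) u := by
      intro u hu
      have hfu := hfnn u hu
      exact ((hderiv u hu).add_const c).log (by positivity)
    have hcont : ContinuousOn (fun v => Real.log (f v + c)) (Icc 0 t) :=
      fun x hx => ((hg2deriv x (hsubT hx)).continuousAt).continuousWithinAt
    have hder : ∀ x ∈ Ioo (0:ℝ) t, HasDerivWithinAt (fun v => Real.log (f v + c))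
        (f' x / (f x + c)) (Ioi x) x :=
      fun x hx => (hg2deriv x (hsubT (Ioo_subset_Icc_self hx))).hasDerivWithinAt
    have hint : IntegrableOn (fun v => K * Λ * φ v) (Icc 0 t) volume := hφt.const_mul _
    have hbound : ∀ x ∈ Ioo (0:ℝ) t, f' x / (f x + c) ≤ K * Λ * φ x := by
      intro x hx
      have hxt : x ∈ Icc (0:ℝ) t := Ioo_subset_Icc_self hx
      have hxT := hsubT hxt
      have hfx := hfnn x hxT
      have hφx := hφnn x hxT
      have hfc : 0 < f x + c := by linarith
      rw [div_le_iff₀ hfc]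
      calc f' x ≤ K * φ x * (Real.log (C + f x) * f x) := key x hxT
        _ ≤ K * φ x * (Λ * (f x + c)) := by
            refine mul_le_mul_of_nonneg_left ?_ (mul_nonneg hKpos.le hφx)
            have h1 := step2' x hxt
            nlinarith
        _ = K * Λ * φ x * (f x + c) := by ring
    have hFTC := intervalIntegral.sub_le_integral_of_hasDeriv_right_of_le ht0 hcont hder hint hbound
    rw [intervalIntegral.integral_const_mul, hf0] at hFTC
    have h1 : 0 < f t + c := by have := hfnn t ⟨ht0, htT⟩; linarith
    have h2 : 0 < f₀ + c := by linarith
    have h3 : f t + c ≤ (f₀ + c) * Real.exp (K * Λ * It) := by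
      calc f t + c = Real.exp (Real.log (f t + c)) := (Real.exp_log h1).symm
        _ ≤ Real.exp (Real.log (f₀ + c) + K * Λ * It) := Real.exp_le_exp.2 (by linarith)
        _ = (f₀ + c) * Real.exp (K * Λ * It) := by rw [Real.exp_add, Real.exp_log h2]
    linarith
  have hfinal : f t ≤ f₀ * Real.exp (K * Λ * It) := by
    refine le_of_forall_pos_le_add ?_
    intro ε hε
    have hc : 0 < ε / Real.exp (K * Λ * It) := by positivity
    calc f t ≤ (f₀ + ε / Real.exp (K * Λ * It)) * Real.exp (K * Λ * It) := step3 _ hc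
      _ = f₀ * Real.exp (K * Λ * It) + ε := by
          rw [add_mul, div_mul_cancel₀ _ (Real.exp_ne_zero _)]
  -- Step 4 : compare with target
  clear_value C K It B Λ
  refine hfinal.trans ?_
  apply mul_le_mul_of_nonneg_left _ hf₀.le
  rw [Real.rpow_def_of_pos (by linarith : (0:ℝ) < C + f₀)]
  apply Real.exp_le_exp.2
  rw [hLdef]
  have e4 : Real.exp (2 * Real.log 2) = 4 := by
    rw [two_mul, Real.exp_add, Real.exp_log h2pos]; norm_num
  have h2E : (2:ℝ) ^ ((2:ℝ) + 16*M*It) = 4 * Real.exp (16*M*It*Real.log 2) := by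
    rw [Real.rpow_def_of_pos h2pos, mul_add, Real.exp_add, mul_comm (Real.log 2) 2, e4,
      mul_comm (Real.log 2) (16*M*It)]
  rw [h2E]
  have hx : 0 ≤ K * It := mul_nonneg hKpos.le hI0
  have h5 : K * It ≤ Real.exp (K * It) := by linarith [Real.add_one_le_exp (K*It)]
  have h6 : Real.exp (K*It) * Real.exp (K*It) = Real.exp (2*(K*It)) := by
    rw [two_mul, Real.exp_add]
  have hK16 : 2*K ≤ 16*M*Real.log 2 := by
    rw [hKdef]
    have he : (2:ℝ)*(2*M/Real.log 2) = 4*M/Real.log 2 := by ring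
    rw [he, div_le_iff₀ hlog2]
    have hL : (0.48:ℝ) ≤ Real.log 2 * Real.log 2 := by
      nlinarith [Real.log_two_gt_d9, sq_nonneg (Real.log 2 - 0.6931471803)]
    have h48 : (4:ℝ) ≤ 16*(Real.log 2 * Real.log 2) := by linarith
    calc 4*M = M*4 := by ring
      _ ≤ M*(16*(Real.log 2*Real.log 2)) := mul_le_mul_of_nonneg_left h48 hM.le
      _ = 16*M*Real.log 2*Real.log 2 := by ring
  have h7 : Real.exp (2*(K*It)) ≤ Real.exp (16*M*It*Real.log 2) := by
    apply Real.exp_le_exp.2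
    nlinarith [mul_le_mul_of_nonneg_right hK16 hI0]
  calc K * (B * Real.exp (K*It)) * It = B * ((K*It) * Real.exp (K*It)) := by ring
    _ ≤ B * (Real.exp (K*It) * Real.exp (K*It)) :=
        mul_le_mul_of_nonneg_left (mul_le_mul_of_nonneg_right h5 (Real.exp_pos _).le) hBpos.le
    _ = B * Real.exp (2*(K*It)) := by rw [h6]
    _ ≤ B * Real.exp (16*M*It*Real.log 2) := mul_le_mul_of_nonneg_left h7 hBpos.le
    _ ≤ B * (4 * Real.exp (16*M*It*Real.log 2)) := by
        nlinarith [Real.exp_pos (16*M*It*Real.log 2), hBpos]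
    _ = Real.log (C + f₀) * (4 * Real.exp (16*M*It*Real.log 2)) := by rw [hBdef]
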